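/- arXiv:1802.03029 — 9 statements merged into one kernel-verified Lean document; each statement's English description precedes it below -/
import Mathlib

section
/- Let g and f be real-valued functions on an interval I of ℝ, and suppose g is a control function of f on I and g is monotone increasing on I. Then f is midpoint convex on I, i.e., for all u < v in I, f((u+v)/2) ≤ (f(u) + f(v))/2. -/
/-!
Comparing the two control inequalities on the adjacent intervals `[x, y]` and `[y, z]`, the
slope of `f` over `[x, y]` is bounded by a value of `g` at a point `≤ y`, and the slope over
`[y, z]` by a value of `g` at a point `≥ y`; monotonicity of `g` makes the slopes of `f`
increase, so `f` is even convex on `I`.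
-/

/-- `f` is a difference-quotient control function of `F` on the set `S`. -/
def IsControl (f F : ℝ → ℝ) (S : Set ℝ) : Prop :=
  ∀ u ∈ S, ∀ v ∈ S, u < v →
    ∃ p ∈ Set.Icc u v ∩ S, ∃ q ∈ Set.Icc u v ∩ S,
      f p ≤ (F v - F u) / (v - u) ∧ (F v - F u) / (v - u) ≤ f q

namespace IsControl

variable {g f : ℝ → ℝ} {S : Set ℝ}

theorem slope_le_slope (hctrl : IsControl g f S) (hmono : MonotoneOn g S) {x y z : ℝ}
    (hx : x ∈ S) (hy : y ∈ S) (hz : z ∈ S) (hxy : x < y) (hyz : y < z) :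
    (f y - f x) / (y - x) ≤ (f z - f y) / (z - y) := by
  obtain ⟨-, -, q, ⟨⟨-, hqy⟩, hqS⟩, -, hleft⟩ := hctrl x hx y hy hxy
  obtain ⟨p, ⟨⟨hyp, -⟩, hpS⟩, -, -, hright, -⟩ := hctrl y hy z hz hyz
  calc (f y - f x) / (y - x) ≤ g q := hleft
    _ ≤ g p := hmono hqS hpS (hqy.trans hyp)
    _ ≤ (f z - f y) / (z - y) := hright

theorem convexOn (hctrl : IsControl g f S) (hS : S.OrdConnected) (hmono : MonotoneOn g S) :
    ConvexOn ℝ S f :=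
  convexOn_of_slope_mono_adjacent hS.convex fun hx hz hxy hyz =>
    hctrl.slope_le_slope hmono hx (hS.out hx hz ⟨hxy.le, hyz.le⟩) hz hxy hyz

end IsControl

theorem ConvexOn.map_midpoint_le {f : ℝ → ℝ} {S : Set ℝ} (hf : ConvexOn ℝ S f) {x y : ℝ}
    (hx : x ∈ S) (hy : y ∈ S) : f ((x + y) / 2) ≤ (f x + f y) / 2 := by
  calc f ((x + y) / 2) = f (1 / 2 * x + 1 / 2 * y) := by ring_nf
    _ ≤ 1 / 2 * f x + 1 / 2 * f y := hf.2 hx hy (by norm_num) (by norm_num) (by norm_num)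
    _ = (f x + f y) / 2 := by ring

theorem midpoint_convex_of_increasing_control (I : Set ℝ) (hI : I.OrdConnected)
    (g f : ℝ → ℝ) (hctrl : IsControl g f I) (hmono : MonotoneOn g I) :
    ∀ u ∈ I, ∀ v ∈ I, u < v → f ((u + v) / 2) ≤ (f u + f v) / 2 :=
  fun _ hu _ hv _ => (hctrl.convexOn hI hmono).map_midpoint_le hu hv
end

section
/- Let I and J be intervals of ℝ with I ∩ J nonempty, and let K = I ∪ J (assumed to be an interval). If g is a control function of f on I and g is a control function of f on J, then g is a control function of f on K. -/
open Set

theorem slope_mem_uIcc_slope_slope {k : Type*} [Field k] [LinearOrder k] [IsStrictOrderedRing k]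
    (F : k → k) {u w v : k} (huw : u < w) (hwv : w < v) :
    slope F u v ∈ uIcc (slope F u w) (slope F w v) := by
  rw [← lineMap_slope_slope_sub_div_sub F u w v (huw.trans hwv).ne, ← segment_eq_uIcc]
  refine lineMap_mem_segment k _ _ ⟨div_nonneg (by linarith) (by linarith), ?_⟩
  exact (div_le_one (by linarith)).2 (by linarith)

def ControlsSlope (g F : ℝ → ℝ) (S : Set ℝ) (u v : ℝ) : Prop :=
  ∃ p ∈ Icc u v ∩ S, ∃ q ∈ Icc u v ∩ S, g p ≤ slope F u v ∧ slope F u v ≤ g q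

theorem isControl_iff_controlsSlope {g F : ℝ → ℝ} {S : Set ℝ} :
    IsControl g F S ↔ ∀ u ∈ S, ∀ v ∈ S, u < v → ControlsSlope g F S u v := by
  simp only [IsControl, ControlsSlope, slope_def_field]

theorem IsControl.controlsSlope {g F : ℝ → ℝ} {S : Set ℝ} (h : IsControl g F S) {u v : ℝ}
    (hu : u ∈ S) (hv : v ∈ S) (huv : u < v) : ControlsSlope g F S u v :=
  isControl_iff_controlsSlope.1 h u hu v hv huv

namespace ControlsSlope

variable {g F : ℝ → ℝ} {S T : Set ℝ} {u w v : ℝ}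

theorem mono (h : ControlsSlope g F S u v) (hST : S ⊆ T) : ControlsSlope g F T u v := by
  obtain ⟨p, ⟨hpuv, hpS⟩, q, ⟨hquv, hqS⟩, hle⟩ := h
  exact ⟨p, ⟨hpuv, hST hpS⟩, q, ⟨hquv, hST hqS⟩, hle⟩

theorem trans (h₁ : ControlsSlope g F S u w) (h₂ : ControlsSlope g F S w v)
    (huw : u < w) (hwv : w < v) : ControlsSlope g F S u v := by
  obtain ⟨p₁, ⟨hp₁, hp₁S⟩, q₁, ⟨hq₁, hq₁S⟩, hp₁le, hq₁le⟩ := h₁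
  obtain ⟨p₂, ⟨hp₂, hp₂S⟩, q₂, ⟨hq₂, hq₂S⟩, hp₂le, hq₂le⟩ := h₂
  have hleft : Icc u w ⊆ Icc u v := Icc_subset_Icc_right hwv.le
  have hright : Icc w v ⊆ Icc u v := Icc_subset_Icc_left huw.le
  rcases mem_uIcc.1 (slope_mem_uIcc_slope_slope F huw hwv) with ⟨hlo, hhi⟩ | ⟨hlo, hhi⟩
  · exact ⟨p₁, ⟨hleft hp₁, hp₁S⟩, q₂, ⟨hright hq₂, hq₂S⟩, hp₁le.trans hlo, hhi.trans hq₂le⟩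
  · exact ⟨p₂, ⟨hright hp₂, hp₂S⟩, q₁, ⟨hleft hq₁, hq₁S⟩, hp₂le.trans hlo, hhi.trans hq₁le⟩

end ControlsSlope

theorem controlsSlope_union_of_mem_left_of_mem_right {g F : ℝ → ℝ} {I J : Set ℝ}
    (hI : I.OrdConnected) (hJ : J.OrdConnected) (hgI : IsControl g F I) (hgJ : IsControl g F J)
    {u w v : ℝ} (hu : u ∈ I) (hv : v ∈ J) (hw : w ∈ I ∩ J) (huv : u < v) :
    ControlsSlope g F (I ∪ J) u v := by
  rcases le_or_gt w u with hwu | huw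
  · exact (hgJ.controlsSlope (hJ.out hw.2 hv ⟨hwu, huv.le⟩) hv huv).mono subset_union_right
  rcases le_or_gt v w with hvw | hwv
  · exact (hgI.controlsSlope hu (hI.out hu hw.1 ⟨huv.le, hvw⟩) huv).mono subset_union_left
  exact ((hgI.controlsSlope hu hw.1 huw).mono subset_union_left).trans
    ((hgJ.controlsSlope hw.2 hv hwv).mono subset_union_right) huw hwv

theorem control_on_union_general (I J : Set ℝ) (hI : I.OrdConnected) (hJ : J.OrdConnected)
    (hIJ : (I ∩ J).Nonempty)
    (g f : ℝ → ℝ) (hgI : IsControl g f I) (hgJ : IsControl g f J) :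
    IsControl g f (I ∪ J) := by
  obtain ⟨w, hw⟩ := hIJ
  rw [isControl_iff_controlsSlope]
  intro u hu v hv huv
  rcases hu with hu | hu <;> rcases hv with hv | hv
  · exact (hgI.controlsSlope hu hv huv).mono subset_union_left
  · exact controlsSlope_union_of_mem_left_of_mem_right hI hJ hgI hgJ hu hv hw huv
  · rw [union_comm]
    exact controlsSlope_union_of_mem_left_of_mem_right hJ hI hgJ hgI hu hv hw.symm huv
  · exact (hgJ.controlsSlope hu hv huv).mono subset_union_right

theorem control_on_union (I J : Set ℝ) (hI : I.OrdConnected) (hJ : J.OrdConnected)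
    (hIJ : (I ∩ J).Nonempty) (hK : (I ∪ J).OrdConnected)
    (g f : ℝ → ℝ) (hgI : IsControl g f I) (hgJ : IsControl g f J) :
    IsControl g f (I ∪ J) :=
  control_on_union_general I J hI hJ hIJ g f hgI hgJ
end

section
/- Let Q be an interval of ℝ and let f : Q → ℝ have bounded variation on Q. If S and R are both integral systems of f on Q, then S(u, v) = R(u, v) for all u, v ∈ Q. -/
/-- `S` is an integral system of `f` on the interval `Q`. -/
def IsIntegralSystem (f : ℝ → ℝ) (S : ℝ → ℝ → ℝ) (Q : Set ℝ) : Prop :=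
  (∀ u ∈ Q, ∀ v ∈ Q, ∀ w ∈ Q, S u v + S v w = S u w) ∧
  (∀ u ∈ Q, ∀ v ∈ Q, u < v →
    ∃ p ∈ Set.Icc u v, ∃ q ∈ Set.Icc u v,
      f p * (v - u) ≤ S u v ∧ S u v ≤ f q * (v - u))

theorem integral_system_unique_of_bv (Q : Set ℝ) (hQ : Q.OrdConnected)
    (f : ℝ → ℝ) (hf : BoundedVariationOn f Q)
    (S R : ℝ → ℝ → ℝ) (hS : IsIntegralSystem f S Q) (hR : IsIntegralSystem f R Q) :
    ∀ u ∈ Q, ∀ v ∈ Q, S u v = R u v := by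
  obtain ⟨hSadd, hSbound⟩ := hS
  obtain ⟨hRadd, hRbound⟩ := hR
  have hflv : LocallyBoundedVariationOn f Q := hf.locallyBoundedVariationOn
  have hS0 : ∀ u ∈ Q, S u u = 0 := by
    intro u hu; have := hSadd u hu u hu u hu; linarith
  have hR0 : ∀ u ∈ Q, R u u = 0 := by
    intro u hu; have := hRadd u hu u hu u hu; linarith
  -- bound on a single interval
  have key : ∀ a ∈ Q, ∀ b ∈ Q, a < b →
      |S a b - R a b| ≤ variationOnFromTo f Q a b * (b - a) := by
    intro a ha b hb hab
    obtain ⟨p, hp, q, hq, h1, h2⟩ := hSbound a ha b hb hab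
    obtain ⟨p', hp', q', hq', h3, h4⟩ := hRbound a ha b hb hab
    have hIcc : Set.Icc a b ⊆ Q := hQ.out ha hb
    have hd : ∀ x ∈ Set.Icc a b, ∀ y ∈ Set.Icc a b,
        |f x - f y| ≤ variationOnFromTo f Q a b := by
      intro x hx y hy
      rw [variationOnFromTo.eq_of_le f Q hab.le]
      have hedist : edist (f x) (f y) ≤ eVariationOn f (Q ∩ Set.Icc a b) :=
        eVariationOn.edist_le f ⟨hIcc hx, hx⟩ ⟨hIcc hy, hy⟩
      have hfin : eVariationOn f (Q ∩ Set.Icc a b) ≠ ⊤ :=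
        ne_top_of_le_ne_top hf (eVariationOn.mono f Set.inter_subset_left)
      have := ENNReal.toReal_mono hfin hedist
      rwa [← dist_edist, Real.dist_eq] at this
    have hba : (0 : ℝ) < b - a := by linarith
    have hqp' := abs_le.1 (hd q hq p' hp')
    have hq'p := abs_le.1 (hd q' hq' p hp)
    rw [abs_le]
    constructor <;> nlinarith [hqp'.1, hqp'.2, hq'p.1, hq'p.2]
  have main : ∀ u ∈ Q, ∀ v ∈ Q, u < v → S u v = R u v := by
    intro u hu v hv huv
    set D : ℝ → ℝ → ℝ := fun a b => S a b - R a b with hD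
    have hIcc : Set.Icc u v ⊆ Q := hQ.out hu hv
    have bound : ∀ n : ℕ, 1 ≤ n →
        |D u v| ≤ (v - u) / n * variationOnFromTo f Q u v := by
      intro n hn
      have hn' : (0 : ℝ) < n := by positivity
      set h : ℝ := (v - u) / n with hh
      have hpos : 0 < h := by
        apply div_pos; linarith; exact hn'
      set x : ℕ → ℝ := fun k => u + k * h with hx
      have hx0 : x 0 = u := by simp [hx]
      have hxn : x n = v := by
        simp only [hx, hh]
        field_simp
        ring
      have hxmem : ∀ k ≤ n, x k ∈ Set.Icc u v := by
        intro k hk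
        constructor
        · simp only [hx]; nlinarith [Nat.cast_nonneg (α := ℝ) k]
        · have hkn : (k : ℝ) ≤ n := Nat.cast_le.2 hk
          have : x k ≤ x n := by
            simp only [hx]
            have := mul_le_mul_of_nonneg_right hkn hpos.le
            linarith
          rwa [hxn] at this
      have hxQ : ∀ k ≤ n, x k ∈ Q := fun k hk => hIcc (hxmem k hk)
      have hstep : ∀ k, x (k + 1) - x k = h := by
        intro k; simp only [hx]; push_cast; ring
      have hxlt : ∀ k, x k < x (k + 1) := by
        intro k; have := hstep k; linarith
      -- telescoping for D
      have telD : ∀ m ≤ n, D (x 0) (x m) =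
          ∑ k ∈ Finset.range m, D (x k) (x (k + 1)) := by
        intro m hm
        induction m with
        | zero => simp [hD, hS0 (x 0) (hxQ 0 (Nat.zero_le n)), hR0 (x 0) (hxQ 0 (Nat.zero_le n))]
        | succ m ih =>
          rw [Finset.sum_range_succ, ← ih (Nat.le_of_succ_le hm)]
          have h1 := hSadd (x 0) (hxQ 0 (Nat.zero_le n)) (x m) (hxQ m (Nat.le_of_succ_le hm))
            (x (m + 1)) (hxQ (m + 1) hm)
          have h2 := hRadd (x 0) (hxQ 0 (Nat.zero_le n)) (x m) (hxQ m (Nat.le_of_succ_le hm))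
            (x (m + 1)) (hxQ (m + 1) hm)
          simp only [hD]; linarith
      -- telescoping for the variation
      have telV : ∀ m ≤ n, variationOnFromTo f Q (x 0) (x m) =
          ∑ k ∈ Finset.range m, variationOnFromTo f Q (x k) (x (k + 1)) := by
        intro m hm
        induction m with
        | zero => simp [variationOnFromTo.self]
        | succ m ih =>
          rw [Finset.sum_range_succ, ← ih (Nat.le_of_succ_le hm),
            variationOnFromTo.add hflv (hxQ 0 (Nat.zero_le n))
              (hxQ m (Nat.le_of_succ_le hm)) (hxQ (m + 1) hm)]
      have hDk : ∀ k < n, |D (x k) (x (k + 1))| ≤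
          variationOnFromTo f Q (x k) (x (k + 1)) * h := by
        intro k hk
        have := key (x k) (hxQ k hk.le) (x (k + 1)) (hxQ (k + 1) hk) (hxlt k)
        rwa [hstep k] at this
      calc |D u v| = |∑ k ∈ Finset.range n, D (x k) (x (k + 1))| := by
            rw [← telD n le_rfl, hx0, hxn]
        _ ≤ ∑ k ∈ Finset.range n, |D (x k) (x (k + 1))| :=
            Finset.abs_sum_le_sum_abs _ _
        _ ≤ ∑ k ∈ Finset.range n, variationOnFromTo f Q (x k) (x (k + 1)) * h := by
            apply Finset.sum_le_sum
            intro k hk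
            exact hDk k (Finset.mem_range.1 hk)
        _ = variationOnFromTo f Q u v * h := by
            rw [← Finset.sum_mul, ← telV n le_rfl, hx0, hxn]
        _ = (v - u) / n * variationOnFromTo f Q u v := by rw [hh]; ring
    -- conclude D u v = 0
    have hV0 : 0 ≤ variationOnFromTo f Q u v := variationOnFromTo.nonneg_of_le f Q huv.le
    have hD0 : D u v = 0 := by
      by_contra hne
      have hc : 0 < |D u v| := abs_pos.2 hne
      set A : ℝ := (v - u) * variationOnFromTo f Q u v with hA
      have hA0 : 0 ≤ A := mul_nonneg (by linarith) hV0
      obtain ⟨n, hngt⟩ := exists_nat_gt (A / |D u v|)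
      have hn1 : 1 ≤ n := by
        by_contra hn
        push_neg at hn
        interval_cases n
        simp only [Nat.cast_zero] at hngt
        have : 0 ≤ A / |D u v| := div_nonneg hA0 hc.le
        linarith
      have hb := bound n hn1
      have hn' : (0 : ℝ) < n := by positivity
      have : A / (n : ℝ) < |D u v| := by
        rw [div_lt_iff₀ hn']
        have := (div_lt_iff₀ hc).1 hngt
        linarith
      have : (v - u) / n * variationOnFromTo f Q u v = A / n := by
        rw [hA]; ring
      linarith
    simp only [hD] at hD0
    linarith
  intro u hu v hv
  rcases lt_trichotomy u v with h | h | h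
  · exact main u hu v hv h
  · subst h; rw [hS0 u hu, hR0 u hu]
  · have hSsym : S u v + S v u = 0 := by
      have := hSadd u hu v hv u hu; rw [hS0 u hu] at this; linarith
    have hRsym : R u v + R v u = 0 := by
      have := hRadd u hu v hv u hu; rw [hR0 u hu] at this; linarith
    have := main v hv u hu h
    linarith
end

section
/- Let a < b be real numbers and let f : [a, b] → ℝ be piecewise monotone, i.e., there exist finitely many points a = x₀ < x₁ < ⋯ < xₙ = b such that f is monotone (increasing or decreasing) on each subinterval [xₖ₋₁, xₖ]. If S and R are both integral systems of f on [a, b], then S(u, v) = R(u, v) for all u, v ∈ [a, b]. -/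
lemma IsIntegralSystem.neg {f : ℝ → ℝ} {S : ℝ → ℝ → ℝ} {Q : Set ℝ}
    (h : IsIntegralSystem f S Q) :
    IsIntegralSystem (fun x => -f x) (fun u v => -(S u v)) Q := by
  obtain ⟨h1, h2⟩ := h
  refine ⟨fun u hu v hv w hw => by have := h1 u hu v hv w hw; dsimp only; linarith, ?_⟩
  intro u hu v hv huv
  obtain ⟨p, hp, q, hq, h3, h4⟩ := h2 u hu v hv huv
  exact ⟨q, hq, p, hp, by simp; linarith, by simp; linarith⟩

lemma IsIntegralSystem.self_eq_zero {f : ℝ → ℝ} {S : ℝ → ℝ → ℝ} {Q : Set ℝ}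
    (h : IsIntegralSystem f S Q) {u : ℝ} (hu : u ∈ Q) : S u u = 0 := by
  have := h.1 u hu u hu u hu; linarith

/-- Core: two integral systems agree on a subinterval where `f` is monotone. -/
lemma mono_eq (a b : ℝ) (f : ℝ → ℝ) (S R : ℝ → ℝ → ℝ)
    (hS : IsIntegralSystem f S (Set.Icc a b)) (hR : IsIntegralSystem f R (Set.Icc a b))
    (u v : ℝ) (hu : u ∈ Set.Icc a b) (hv : v ∈ Set.Icc a b) (huv : u < v)
    (hm : MonotoneOn f (Set.Icc u v)) : S u v = R u v := by
  have hsub : Set.Icc u v ⊆ Set.Icc a b :=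
    Set.Icc_subset_Icc hu.1 hv.2
  -- key bound for each n ≥ 1
  have key : ∀ n : ℕ, 1 ≤ n → |S u v - R u v| ≤ (f v - f u) * ((v - u) / n) := by
    intro n hn
    have hn0 : (0:ℝ) < n := by exact_mod_cast hn
    set Δ : ℝ := (v - u) / n with hΔ
    have hΔpos : 0 < Δ := div_pos (by linarith [huv]) hn0
    set t : ℕ → ℝ := fun i => u + i * Δ with ht
    have ht0 : t 0 = u := by simp [ht]
    have htn : t n = v := by
      simp only [ht, hΔ]
      field_simp
      ring
    have hstep : ∀ i : ℕ, t (i+1) - t i = Δ := by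
      intro i; simp only [ht]; push_cast; ring
    have htmono : ∀ i j : ℕ, i ≤ j → t i ≤ t j := by
      intro i j hij
      simp only [ht]
      have : (i:ℝ) ≤ j := by exact_mod_cast hij
      nlinarith
    have htmem : ∀ i : ℕ, i ≤ n → t i ∈ Set.Icc u v := by
      intro i hi
      constructor
      · rw [← ht0]; exact htmono 0 i (Nat.zero_le _)
      · rw [← htn]; exact htmono i n hi
    have htab : ∀ i : ℕ, i ≤ n → t i ∈ Set.Icc a b := fun i hi => hsub (htmem i hi)
    -- bounds on each subinterval, for any integral system
    have bound : ∀ (T : ℝ → ℝ → ℝ), IsIntegralSystem f T (Set.Icc a b) →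
        ∀ i : ℕ, i < n →
        f (t i) * Δ ≤ T (t i) (t (i+1)) ∧ T (t i) (t (i+1)) ≤ f (t (i+1)) * Δ := by
      intro T hT i hi
      have hi1 : i + 1 ≤ n := hi
      have hlt : t i < t (i+1) := by have := hstep i; linarith
      obtain ⟨p, hp, q, hq, h3, h4⟩ :=
        hT.2 (t i) (htab i hi.le) (t (i+1)) (htab (i+1) hi1) hlt
      have hsub2 : Set.Icc (t i) (t (i+1)) ⊆ Set.Icc u v :=
        Set.Icc_subset_Icc (htmem i hi.le).1 (htmem (i+1) hi1).2
      have hfp : f (t i) ≤ f p := hm (htmem i hi.le) (hsub2 hp) hp.1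
      have hfq : f q ≤ f (t (i+1)) := hm (hsub2 hq) (htmem (i+1) hi1) hq.2
      rw [hstep i] at h3 h4
      constructor
      · calc f (t i) * Δ ≤ f p * Δ := by nlinarith
          _ ≤ T (t i) (t (i+1)) := h3
      · calc T (t i) (t (i+1)) ≤ f q * Δ := h4
          _ ≤ f (t (i+1)) * Δ := by nlinarith
    -- telescoping
    have tele : ∀ (T : ℝ → ℝ → ℝ), IsIntegralSystem f T (Set.Icc a b) →
        T u v = ∑ i ∈ Finset.range n, T (t i) (t (i+1)) := by
      intro T hT
      have : ∀ m : ℕ, m ≤ n → T u (t m) = ∑ i ∈ Finset.range m, T (t i) (t (i+1)) := by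
        intro m hm'
        induction m with
        | zero => simp [ht0, hT.self_eq_zero (hsub ⟨le_refl u, huv.le⟩)]
        | succ m ih =>
          rw [Finset.sum_range_succ, ← ih (Nat.le_of_succ_le hm')]
          exact (hT.1 u (hsub ⟨le_refl u, huv.le⟩) (t m) (htab m (Nat.le_of_succ_le hm'))
            (t (m+1)) (htab (m+1) hm')).symm
      rw [← htn]; exact this n le_rfl
    rw [tele S hS, tele R hR, ← Finset.sum_sub_distrib]
    have habs : |∑ i ∈ Finset.range n, (S (t i) (t (i+1)) - R (t i) (t (i+1)))|
        ≤ ∑ i ∈ Finset.range n, (f (t (i+1)) * Δ - f (t i) * Δ) := by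
      refine (Finset.abs_sum_le_sum_abs _ _).trans (Finset.sum_le_sum ?_)
      intro i hi
      rw [Finset.mem_range] at hi
      obtain ⟨hS1, hS2⟩ := bound S hS i hi
      obtain ⟨hR1, hR2⟩ := bound R hR i hi
      rw [abs_le]; constructor <;> linarith
    refine habs.trans ?_
    rw [Finset.sum_range_sub (fun i => f (t i) * Δ), ht0, htn]
    ring_nf
    exact le_refl _
  -- conclude
  by_contra hne
  have hd : 0 < |S u v - R u v| := abs_pos.mpr (sub_ne_zero.mpr hne)
  set d := |S u v - R u v|
  set C := (f v - f u) * (v - u) with hC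
  have hC0 : 0 ≤ C := by
    have : f u ≤ f v := hm ⟨le_refl u, huv.le⟩ ⟨huv.le, le_refl v⟩ huv.le
    nlinarith
  obtain ⟨n, hn⟩ := exists_nat_gt (C / d)
  have hn1 : 1 ≤ n := by
    by_contra h
    push_neg at h
    interval_cases n
    simp at hn
    exact absurd hn (not_lt.mpr (div_nonneg hC0 hd.le))
  have h1 := key n hn1
  have hn0 : (0:ℝ) < n := by exact_mod_cast hn1
  have : C / n < d := by
    rw [div_lt_iff₀ hn0]
    rw [div_lt_iff₀ hd] at hn
    linarith [hn]
  have : (f v - f u) * ((v - u) / n) = C / n := by rw [hC]; ring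
  linarith [key n hn1, this ▸ key n hn1]

theorem integral_system_unique_of_piecewise_monotone (a b : ℝ) (hab : a < b)
    (f : ℝ → ℝ)
    (hpm : ∃ n : ℕ, ∃ x : ℕ → ℝ, x 0 = a ∧ x n = b ∧
      (∀ k < n, x k < x (k + 1)) ∧
      (∀ k < n, MonotoneOn f (Set.Icc (x k) (x (k + 1))) ∨
        AntitoneOn f (Set.Icc (x k) (x (k + 1)))))
    (S R : ℝ → ℝ → ℝ)
    (hS : IsIntegralSystem f S (Set.Icc a b)) (hR : IsIntegralSystem f R (Set.Icc a b)) :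
    ∀ u ∈ Set.Icc a b, ∀ v ∈ Set.Icc a b, S u v = R u v := by
  obtain ⟨n, x, hx0, hxn, hlt, hmono⟩ := hpm
  -- piecewise equality (either monotone or antitone)
  have piece : ∀ u v : ℝ, u ∈ Set.Icc a b → v ∈ Set.Icc a b → u < v →
      (MonotoneOn f (Set.Icc u v) ∨ AntitoneOn f (Set.Icc u v)) → S u v = R u v := by
    intro u v hu hv huv hcase
    rcases hcase with hmon | hant
    · exact mono_eq a b f S R hS hR u v hu hv huv hmon
    · have h := mono_eq a b (fun x => -f x) (fun p q => -(S p q)) (fun p q => -(R p q))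
        hS.neg hR.neg u v hu hv huv (fun p hp q hq hpq => by
          simp only [neg_le_neg_iff]; exact hant hp hq hpq)
      simpa using h
  -- order of partition points
  have hxle : ∀ i j : ℕ, i ≤ j → j ≤ n → x i ≤ x j := by
    intro i j hij hjn
    induction j with
    | zero => simp_all
    | succ j ih =>
      rcases Nat.lt_or_ge i (j+1) with h | h
      · have : x j ≤ x (j+1) := (hlt j (by omega)).le
        have := ih (by omega) (by omega)
        linarith
      · have : i = j + 1 := by omega
        simp [this]
  have hxmem : ∀ k : ℕ, k ≤ n → x k ∈ Set.Icc a b := by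
    intro k hk
    exact ⟨hx0 ▸ hxle 0 k (Nat.zero_le _) hk, hxn ▸ hxle k n hk le_rfl⟩
  -- S a t = R a t for all t
  have claim : ∀ k : ℕ, k ≤ n → ∀ t ∈ Set.Icc a (x k), S a t = R a t := by
    intro k
    induction k with
    | zero =>
      intro _ t ht
      rw [hx0] at ht
      have : t = a := le_antisymm ht.2 ht.1
      rw [this, hS.self_eq_zero (Set.left_mem_Icc.mpr hab.le),
        hR.self_eq_zero (Set.left_mem_Icc.mpr hab.le)]
    | succ k ih =>
      intro hk t ht
      have hkn : k < n := hk
      have htab : t ∈ Set.Icc a b := ⟨ht.1, le_trans ht.2 (hxmem (k+1) hk).2⟩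
      rcases le_or_gt t (x k) with h | h
      · exact ih hkn.le t ⟨ht.1, h⟩
      · have hxk : x k ∈ Set.Icc a b := hxmem k hkn.le
        have hxka : a ≤ x k := hxk.1
        have h1 : S a (x k) + S (x k) t = S a t :=
          hS.1 a (Set.left_mem_Icc.mpr hab.le) (x k) hxk t htab
        have h2 : R a (x k) + R (x k) t = R a t :=
          hR.1 a (Set.left_mem_Icc.mpr hab.le) (x k) hxk t htab
        have e1 : S a (x k) = R a (x k) :=
          ih hkn.le (x k) ⟨hxka, le_refl _⟩
        have e2 : S (x k) t = R (x k) t := by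
          apply piece (x k) t hxk htab h
          have hsub : Set.Icc (x k) t ⊆ Set.Icc (x k) (x (k+1)) :=
            Set.Icc_subset_Icc le_rfl ht.2
          rcases hmono k hkn with hm | hm
          · exact Or.inl (hm.mono hsub)
          · exact Or.inr (hm.mono hsub)
        linarith
  have claim' : ∀ t ∈ Set.Icc a b, S a t = R a t := by
    intro t ht
    exact claim n le_rfl t (by rwa [hxn])
  intro u hu v hv
  have ha : a ∈ Set.Icc a b := Set.left_mem_Icc.mpr hab.le
  have h1 : S a u + S u v = S a v := hS.1 a ha u hu v hv
  have h2 : R a u + R u v = R a v := hR.1 a ha u hu v hv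
  have := claim' u hu
  have := claim' v hv
  linarith
end

section
/- Let a < b be real numbers, let f : [a, b] → ℝ be piecewise monotone (there exist finitely many points a = x₀ < x₁ < ⋯ < xₙ = b such that f is monotone on each subinterval [xₖ₋₁, xₖ]), and suppose f is a control function of both F and G on [a, b]. Then F − G is constant on [a, b]. -/
lemma isControl_neg {f F : ℝ → ℝ} {S : Set ℝ} (h : IsControl f F S) :
    IsControl (fun t => -f t) (fun t => -F t) S := by
  intro u hu v hv huv
  obtain ⟨p, hp, q, hq, h1, h2⟩ := h u hu v hv huv
  refine ⟨q, hq, p, hp, ?_, ?_⟩ <;>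
  · have hvu : (0:ℝ) < v - u := by linarith
    have : (-F v - -F u) / (v - u) = -((F v - F u) / (v - u)) := by ring
    rw [this]; simp only []; linarith

lemma key_est {f F G : ℝ → ℝ} {a b : ℝ} (hF : IsControl f F (Set.Icc a b))
    (hG : IsControl f G (Set.Icc a b)) {u v : ℝ} (hu : u ∈ Set.Icc a b)
    (hv : v ∈ Set.Icc a b) (huv : u < v) (hmono : MonotoneOn f (Set.Icc u v)) :
    |(F v - G v) - (F u - G u)| ≤ (f v - f u) * (v - u) := by
  have hvu : (0:ℝ) < v - u := by linarith
  obtain ⟨p, hp, q, hq, h1, h2⟩ := hF u hu v hv huv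
  obtain ⟨p', hp', q', hq', h1', h2'⟩ := hG u hu v hv huv
  have huI : u ∈ Set.Icc u v := ⟨le_refl u, le_of_lt huv⟩
  have hvI : v ∈ Set.Icc u v := ⟨le_of_lt huv, le_refl v⟩
  have hfp : f u ≤ f p := hmono huI hp.1 hp.1.1
  have hfq : f q ≤ f v := hmono hq.1 hvI hq.1.2
  have hfp' : f u ≤ f p' := hmono huI hp'.1 hp'.1.1
  have hfq' : f q' ≤ f v := hmono hq'.1 hvI hq'.1.2
  have hFl : f u ≤ (F v - F u) / (v - u) := le_trans hfp h1
  have hFu : (F v - F u) / (v - u) ≤ f v := le_trans h2 hfq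
  have hGl : f u ≤ (G v - G u) / (v - u) := le_trans hfp' h1'
  have hGu : (G v - G u) / (v - u) ≤ f v := le_trans h2' hfq'
  have hFe : F v - F u = ((F v - F u) / (v - u)) * (v - u) := by
    field_simp
  have hGe : G v - G u = ((G v - G u) / (v - u)) * (v - u) := by
    field_simp
  rw [abs_le]
  constructor <;> nlinarith [hFl, hFu, hGl, hGu]

lemma const_on_piece {f F G : ℝ → ℝ} {a b c d : ℝ} (hF : IsControl f F (Set.Icc a b))
    (hG : IsControl f G (Set.Icc a b)) (hsub : Set.Icc c d ⊆ Set.Icc a b)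
    (hmono : MonotoneOn f (Set.Icc c d)) {u v : ℝ} (hu : u ∈ Set.Icc c d)
    (hv : v ∈ Set.Icc c d) (huv : u ≤ v) :
    F v - G v = F u - G u := by
  rcases eq_or_lt_of_le huv with h | huv
  · rw [h]
  have hvu : (0:ℝ) < v - u := by linarith
  have hfuv : f u ≤ f v := hmono hu hv (le_of_lt huv)
  -- main estimate for each n
  have key : ∀ n : ℕ, 0 < n →
      |(F v - G v) - (F u - G u)| ≤ (f v - f u) * (v - u) / n := by
    intro n hn
    set δ : ℝ := (v - u) / n with hδ
    have hnR : (0:ℝ) < n := by exact_mod_cast hn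
    have hδpos : 0 < δ := by positivity
    set y : ℕ → ℝ := fun i => u + i * δ with hy
    have hy0 : y 0 = u := by simp [hy]
    have hyn : y n = v := by
      simp only [hy, hδ]
      field_simp
      ring
    have hystep : ∀ i, y (i + 1) = y i + δ := by
      intro i; simp [hy]; push_cast; ring
    have hymem : ∀ i ≤ n, y i ∈ Set.Icc u v := by
      intro i hi
      have hiR : (i:ℝ) ≤ n := by exact_mod_cast hi
      constructor
      · have : 0 ≤ (i:ℝ) * δ := by positivity
        simp only [hy]; linarith
      · have : (i:ℝ) * δ ≤ (n:ℝ) * δ := by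
          apply mul_le_mul_of_nonneg_right hiR (le_of_lt hδpos)
        have hnδ : (n:ℝ) * δ = v - u := by
          rw [hδ]; field_simp
        simp only [hy]; linarith
    have hstep : ∀ i < n,
        |(F (y (i+1)) - G (y (i+1))) - (F (y i) - G (y i))| ≤
          (f (y (i+1)) - f (y i)) * δ := by
      intro i hi
      have h1 : y i ∈ Set.Icc u v := hymem i (le_of_lt hi)
      have h2 : y (i+1) ∈ Set.Icc u v := hymem (i+1) hi
      have hlt : y i < y (i+1) := by rw [hystep]; linarith
      have hsub2 : Set.Icc (y i) (y (i+1)) ⊆ Set.Icc c d := by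
        apply Set.Icc_subset_Icc
        · exact le_trans hu.1 h1.1
        · exact le_trans h2.2 hv.2
      have := key_est hF hG (hsub (hsub2 ⟨le_refl _, le_of_lt hlt⟩))
        (hsub (hsub2 ⟨le_of_lt hlt, le_refl _⟩)) hlt (hmono.mono hsub2)
      have heq : y (i+1) - y i = δ := by rw [hystep]; ring
      rw [heq] at this
      exact this
    -- telescoping
    have htel : (F v - G v) - (F u - G u) =
        ∑ i ∈ Finset.range n, ((F (y (i+1)) - G (y (i+1))) - (F (y i) - G (y i))) := by
      rw [Finset.sum_range_sub (fun i => F (y i) - G (y i)) n, hy0, hyn]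
    have hftel : ∑ i ∈ Finset.range n, (f (y (i+1)) - f (y i)) = f v - f u := by
      rw [Finset.sum_range_sub (fun i => f (y i)) n, hy0, hyn]
    calc |(F v - G v) - (F u - G u)|
        = |∑ i ∈ Finset.range n, ((F (y (i+1)) - G (y (i+1))) - (F (y i) - G (y i)))| := by
          rw [htel]
      _ ≤ ∑ i ∈ Finset.range n, |(F (y (i+1)) - G (y (i+1))) - (F (y i) - G (y i))| :=
          Finset.abs_sum_le_sum_abs _ _
      _ ≤ ∑ i ∈ Finset.range n, (f (y (i+1)) - f (y i)) * δ := by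
          apply Finset.sum_le_sum
          intro i hi
          exact hstep i (Finset.mem_range.mp hi)
      _ = (f v - f u) * δ := by rw [← Finset.sum_mul, hftel]
      _ = (f v - f u) * (v - u) / n := by rw [hδ]; ring
  -- pass to the limit
  have hlim : Filter.Tendsto (fun n : ℕ => (f v - f u) * (v - u) / n)
      Filter.atTop (nhds 0) := tendsto_const_div_atTop_nhds_zero_nat _
  have hle : |(F v - G v) - (F u - G u)| ≤ 0 := by
    apply ge_of_tendsto hlim
    filter_upwards [Filter.eventually_ge_atTop 1] with n hn
    exact key n hn
  have := abs_nonneg ((F v - G v) - (F u - G u))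
  have : |(F v - G v) - (F u - G u)| = 0 := le_antisymm hle this
  have := abs_eq_zero.mp this
  linarith

lemma const_on_piece' {f F G : ℝ → ℝ} {a b c d : ℝ} (hF : IsControl f F (Set.Icc a b))
    (hG : IsControl f G (Set.Icc a b)) (hsub : Set.Icc c d ⊆ Set.Icc a b)
    (hmono : MonotoneOn f (Set.Icc c d) ∨ AntitoneOn f (Set.Icc c d)) {u v : ℝ}
    (hu : u ∈ Set.Icc c d) (hv : v ∈ Set.Icc c d) (huv : u ≤ v) :
    F v - G v = F u - G u := by
  rcases hmono with h | h
  · exact const_on_piece hF hG hsub h hu hv huv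
  · have hmono' : MonotoneOn (fun t => -f t) (Set.Icc c d) := h.neg
    have := const_on_piece (isControl_neg hF) (isControl_neg hG) hsub hmono' hu hv huv
    linarith

theorem control_unique_of_piecewise_monotone (a b : ℝ) (hab : a < b)
    (f F G : ℝ → ℝ)
    (hpm : ∃ n : ℕ, ∃ x : ℕ → ℝ, x 0 = a ∧ x n = b ∧
      (∀ k < n, x k < x (k + 1)) ∧
      (∀ k < n, MonotoneOn f (Set.Icc (x k) (x (k + 1))) ∨
        AntitoneOn f (Set.Icc (x k) (x (k + 1)))))
    (hF : IsControl f F (Set.Icc a b)) (hG : IsControl f G (Set.Icc a b)) :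
    ∃ C : ℝ, ∀ x ∈ Set.Icc a b, F x - G x = C := by
  obtain ⟨n, x, hx0, hxn, hlt, hmono⟩ := hpm
  have hchain : ∀ i j, i ≤ j → j ≤ n → x i ≤ x j := by
    intro i j hij hjn
    induction j with
    | zero => rw [Nat.le_zero.mp hij]
    | succ m ih =>
      rcases Nat.lt_succ_iff_lt_or_eq.mp (Nat.lt_succ_of_le hij) with h | h
      · have h1 : x i ≤ x m := ih (Nat.lt_succ_iff.mp h) (le_of_lt (Nat.lt_of_succ_le hjn))
        have h2 : x m < x (m + 1) := hlt m (Nat.lt_of_succ_le hjn)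
        linarith
      · rw [h]
  refine ⟨F a - G a, ?_⟩
  have claim : ∀ k ≤ n, ∀ y, a ≤ y → y ≤ x k → F y - G y = F a - G a := by
    intro k
    induction k with
    | zero =>
      intro _ y hy1 hy2
      rw [hx0] at hy2
      have : y = a := le_antisymm hy2 hy1
      rw [this]
    | succ m ih =>
      intro hkn y hy1 hy2
      have hmn : m < n := Nat.lt_of_succ_le hkn
      rcases le_or_gt y (x m) with h | h
      · exact ih (le_of_lt hmn) y hy1 h
      · have haxm : a ≤ x m := hx0 ▸ hchain 0 m (Nat.zero_le m) (le_of_lt hmn)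
        have hsub : Set.Icc (x m) (x (m+1)) ⊆ Set.Icc a b := by
          apply Set.Icc_subset_Icc haxm
          exact hxn ▸ hchain (m+1) n hkn le_rfl
        have h1 : x m ∈ Set.Icc (x m) (x (m+1)) := ⟨le_refl _, le_of_lt (hlt m hmn)⟩
        have h2 : y ∈ Set.Icc (x m) (x (m+1)) := ⟨le_of_lt h, hy2⟩
        have := const_on_piece' hF hG hsub (hmono m hmn) h1 h2 (le_of_lt h)
        rw [this]
        exact ih (le_of_lt hmn) (x m) haxm le_rfl
  intro y hy
  exact claim n le_rfl y hy.1 (hxn ▸ hy.2)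
end

section
/- Let a < b be real numbers and let f : [a, b] → ℝ be a Lipschitz function. If f is a control function of both F and G on [a, b], then F − G is constant on [a, b]. -/
lemma control_key (a b : ℝ)
    (f F G : ℝ → ℝ) (M : ℝ) (hM : 0 < M)
    (hlip : ∀ u ∈ Set.Icc a b, ∀ v ∈ Set.Icc a b, |f u - f v| ≤ M * |u - v|)
    (hF : IsControl f F (Set.Icc a b)) (hG : IsControl f G (Set.Icc a b)) :
    ∀ u ∈ Set.Icc a b, ∀ v ∈ Set.Icc a b, u < v →
      |(F v - G v) - (F u - G u)| ≤ M * (v - u) ^ 2 := by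
  intro u hu v hv huv
  obtain ⟨p₁, ⟨hp₁uv, hp₁ab⟩, q₁, ⟨hq₁uv, hq₁ab⟩, hFl, hFu⟩ := hF u hu v hv huv
  obtain ⟨p₂, ⟨hp₂uv, hp₂ab⟩, q₂, ⟨hq₂uv, hq₂ab⟩, hGl, hGu⟩ := hG u hu v hv huv
  have hd : 0 < v - u := by linarith
  have habs : ∀ x ∈ Set.Icc u v, ∀ y ∈ Set.Icc u v, |x - y| ≤ v - u := by
    intro x hx y hy
    rw [abs_le]
    constructor <;> [linarith [hx.1, hy.2]; linarith [hx.2, hy.1]]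
  have h1 : (F v - F u) / (v - u) - (G v - G u) / (v - u) ≤ M * (v - u) := by
    have := hlip q₁ hq₁ab p₂ hp₂ab
    have h2 := habs q₁ hq₁uv p₂ hp₂uv
    have := le_abs_self (f q₁ - f p₂)
    nlinarith [this, mul_le_mul_of_nonneg_left h2 hM.le]
  have h2 : (G v - G u) / (v - u) - (F v - F u) / (v - u) ≤ M * (v - u) := by
    have := hlip q₂ hq₂ab p₁ hp₁ab
    have h2 := habs q₂ hq₂uv p₁ hp₁uv
    have := le_abs_self (f q₂ - f p₁)
    nlinarith [this, mul_le_mul_of_nonneg_left h2 hM.le]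
  have hq : |(F v - F u) / (v - u) - (G v - G u) / (v - u)| ≤ M * (v - u) := by
    rw [abs_le]; constructor <;> linarith
  have heq : (F v - G v) - (F u - G u) =
      ((F v - F u) / (v - u) - (G v - G u) / (v - u)) * (v - u) := by
    field_simp
    ring
  rw [heq, abs_mul, abs_of_pos hd, sq]
  calc |(F v - F u) / (v - u) - (G v - G u) / (v - u)| * (v - u)
      ≤ (M * (v - u)) * (v - u) := by
        apply mul_le_mul_of_nonneg_right hq hd.le
    _ = M * ((v - u) * (v - u)) := by ring

theorem control_unique_of_lipschitz (a b : ℝ) (hab : a < b)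
    (f F G : ℝ → ℝ) (M : ℝ) (hM : 0 < M)
    (hlip : ∀ u ∈ Set.Icc a b, ∀ v ∈ Set.Icc a b, |f u - f v| ≤ M * |u - v|)
    (hF : IsControl f F (Set.Icc a b)) (hG : IsControl f G (Set.Icc a b)) :
    ∃ C : ℝ, ∀ x ∈ Set.Icc a b, F x - G x = C := by
  have key := control_key a b f F G M hM hlip hF hG
  set H : ℝ → ℝ := fun x => F x - G x with hH
  -- subdivided estimate
  have sub : ∀ u ∈ Set.Icc a b, ∀ v ∈ Set.Icc a b, u < v → ∀ n : ℕ, 0 < n →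
      |H v - H u| ≤ M * (v - u) ^ 2 / n := by
    intro u hu v hv huv n hn
    set d : ℝ := (v - u) / n with hd
    have hn' : (0:ℝ) < n := Nat.cast_pos.mpr hn
    have hdpos : 0 < d := div_pos (by linarith) hn'
    have hnd : (n : ℝ) * d = v - u := by rw [hd]; field_simp [hn'.ne']
    set t : ℕ → ℝ := fun i => u + i * d with ht
    have htmem : ∀ i : ℕ, i ≤ n → t i ∈ Set.Icc a b := by
      intro i hi
      have h1 : (0:ℝ) ≤ (i:ℝ) * d := by positivity
      have h2 : (i:ℝ) * d ≤ (n:ℝ) * d := by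
        apply mul_le_mul_of_nonneg_right _ hdpos.le
        exact_mod_cast hi
      constructor
      · have := hu.1; simp only [ht]; linarith
      · have := hv.2; simp only [ht]; linarith [hnd ▸ h2]
    have hstep : ∀ i : ℕ, i < n → |H (t (i+1)) - H (t i)| ≤ M * d ^ 2 := by
      intro i hi
      have hlt : t i < t (i + 1) := by
        simp only [ht]
        push_cast
        nlinarith
      have hdiff : t (i + 1) - t i = d := by
        simp only [ht]; push_cast; ring
      have := key (t i) (htmem i hi.le) (t (i+1)) (htmem (i+1) hi) hlt
      rwa [hdiff] at this
    have htel : H v - H u = ∑ i ∈ Finset.range n, (H (t (i+1)) - H (t i)) := by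
      rw [Finset.sum_range_sub (fun i => H (t i))]
      have h0 : t 0 = u := by simp [ht]
      have hnn : t n = v := by simp only [ht]; linarith [hnd]
      rw [h0, hnn]
    calc |H v - H u| = |∑ i ∈ Finset.range n, (H (t (i+1)) - H (t i))| := by rw [htel]
      _ ≤ ∑ i ∈ Finset.range n, |H (t (i+1)) - H (t i)| := Finset.abs_sum_le_sum_abs _ _
      _ ≤ ∑ i ∈ Finset.range n, M * d ^ 2 := by
          apply Finset.sum_le_sum
          intro i hi
          exact hstep i (Finset.mem_range.mp hi)
      _ = n * (M * d ^ 2) := by rw [Finset.sum_const, Finset.card_range]; simp [mul_comm]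
      _ = M * (v - u) ^ 2 / n := by
          rw [hd]; field_simp
  -- conclude constancy
  refine ⟨H a, fun x hx => ?_⟩
  rcases eq_or_lt_of_le hx.1 with h | h
  · rw [← h]
  · have hzero : |H x - H a| ≤ 0 := by
      have htend : Filter.Tendsto (fun n : ℕ => M * (x - a) ^ 2 / n)
          Filter.atTop (nhds 0) := tendsto_const_div_atTop_nhds_zero_nat _
      refine ge_of_tendsto htend ?_
      filter_upwards [Filter.eventually_gt_atTop 0] with n hn
      exact sub a (Set.left_mem_Icc.mpr hab.le) x hx h n hn
    have h2 : H x - H a = 0 := abs_eq_zero.mp (le_antisymm hzero (abs_nonneg _))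
    have : H x = H a := by linarith
    simpa [hH] using this
end

section
/- Let a < b be real numbers, let M > 0, and let g, f : [a, b] → ℝ satisfy |(f(v) − f(u))/(v − u) − g(u)| ≤ M·|v − u| for all distinct u, v ∈ [a, b]. Then g is Lipschitz on [a, b] with constant 2M, and g is a control function of f on [a, b]. -/
theorem lipschitz_control_of_linqun (a b : ℝ) (hab : a < b)
    (g f : ℝ → ℝ) (M : ℝ) (hM : 0 < M)
    (hlin : ∀ u ∈ Set.Icc a b, ∀ v ∈ Set.Icc a b, u ≠ v →
      |(f v - f u) / (v - u) - g u| ≤ M * |v - u|) :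
    (∀ u ∈ Set.Icc a b, ∀ v ∈ Set.Icc a b, |g u - g v| ≤ 2 * M * |u - v|) ∧
    IsControl g f (Set.Icc a b) := by
  -- key quadratic bound
  have key : ∀ x ∈ Set.Icc a b, ∀ y ∈ Set.Icc a b,
      |f y - f x - g x * (y - x)| ≤ M * |y - x| ^ 2 := by
    intro x hx y hy
    rcases eq_or_ne y x with rfl | hne
    · simp
    have h := hlin x hx y hy (Ne.symm hne)
    have hyx : y - x ≠ 0 := sub_ne_zero.mpr hne
    have : (f y - f x) / (y - x) - g x = (f y - f x - g x * (y - x)) / (y - x) := by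
      field_simp
    rw [this, abs_div] at h
    have habs : |y - x| > 0 := abs_pos.mpr hyx
    calc |f y - f x - g x * (y - x)| = |f y - f x - g x * (y - x)| / |y - x| * |y - x| := by
          field_simp
      _ ≤ M * |y - x| * |y - x| := by
          apply mul_le_mul_of_nonneg_right h (abs_nonneg _)
      _ = M * |y - x| ^ 2 := by ring
  constructor
  · intro u hu v hv
    rcases eq_or_ne u v with rfl | hne
    · simp
    have h1 := hlin u hu v hv hne
    have h2 := hlin v hv u hu (Ne.symm hne)
    have hsym : (f u - f v) / (u - v) = (f v - f u) / (v - u) := by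
      rw [div_eq_div_iff (sub_ne_zero.mpr hne) (sub_ne_zero.mpr (Ne.symm hne))]
      ring
    rw [hsym] at h2
    have habs : |u - v| = |v - u| := abs_sub_comm u v
    calc |g u - g v| = |((f v - f u) / (v - u) - g v) - ((f v - f u) / (v - u) - g u)| := by
          ring_nf
      _ ≤ |(f v - f u) / (v - u) - g v| + |(f v - f u) / (v - u) - g u| := abs_sub _ _
      _ ≤ M * |u - v| + M * |v - u| := add_le_add h2 h1
      _ = 2 * M * |u - v| := by rw [habs]; ring
  · intro u hu v hv huv
    -- f is continuous on [u,v] and differentiable on (u,v) with derivative g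
    have hsub : Set.Icc u v ⊆ Set.Icc a b := Set.Icc_subset_Icc hu.1 hv.2
    have hcont : ContinuousOn f (Set.Icc u v) := by
      intro x hx
      have hx' := hsub hx
      have : ∀ y ∈ Set.Icc a b, |f y - f x| ≤ (|g x| + M * (b - a)) * |y - x| := by
        intro y hy
        have := key x hx' y hy
        have h0 := key x hx' y hy
        have h1 : |f y - f x| ≤ |f y - f x - g x * (y - x)| + |g x| * |y - x| := by
          calc |f y - f x| = |(f y - f x - g x * (y - x)) + g x * (y - x)| := by ring_nf
            _ ≤ |f y - f x - g x * (y - x)| + |g x * (y - x)| := abs_add_le _ _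
            _ = |f y - f x - g x * (y - x)| + |g x| * |y - x| := by rw [abs_mul]
        have h2 : |y - x| ≤ b - a := by
          rw [abs_sub_le_iff]; constructor <;> [linarith [hy.2, hx'.1]; linarith [hy.1, hx'.2]]
        have h3 : M * |y - x| ^ 2 ≤ M * (b - a) * |y - x| := by
          nlinarith [abs_nonneg (y - x), mul_nonneg (mul_nonneg hM.le (abs_nonneg (y - x)))
            (sub_nonneg.mpr h2)]
        nlinarith [abs_nonneg (y - x), abs_nonneg (g x)]
      have hcw : ContinuousWithinAt f (Set.Icc a b) x := by
        rw [Metric.continuousWithinAt_iff]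
        intro ε hε
        have hC : 0 < |g x| + M * (b - a) + 1 := by nlinarith [abs_nonneg (g x), mul_pos hM (sub_pos.mpr hab)]
        refine ⟨ε / (|g x| + M * (b - a) + 1), div_pos hε hC, fun {y} hy hd => ?_⟩
        have hb := this y hy
        rw [Real.dist_eq] at hd ⊢
        calc |f y - f x| ≤ (|g x| + M * (b - a)) * |y - x| := hb
          _ ≤ (|g x| + M * (b - a) + 1) * |y - x| := by
              apply mul_le_mul_of_nonneg_right _ (abs_nonneg _); linarith
          _ < (|g x| + M * (b - a) + 1) * (ε / (|g x| + M * (b - a) + 1)) :=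
              mul_lt_mul_of_pos_left hd hC
          _ = ε := by field_simp
      exact hcw.mono hsub
    have hderiv : ∀ x ∈ Set.Ioo u v, HasDerivAt f (g x) x := by
      intro x hx
      have hx' : x ∈ Set.Ioo a b := ⟨lt_of_le_of_lt hu.1 hx.1, lt_of_lt_of_le hx.2 hv.2⟩
      rw [hasDerivAt_iff_isLittleO]
      rw [Asymptotics.isLittleO_iff]
      intro ε hε
      have hmem : Set.Icc a b ∈ nhds x := Icc_mem_nhds hx'.1 hx'.2
      have hball : {y : ℝ | |y - x| ≤ ε / M} ∈ nhds x := by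
        have : Metric.closedBall x (ε / M) ∈ nhds x :=
          Metric.closedBall_mem_nhds x (by positivity)
        simpa [Metric.closedBall, Real.dist_eq] using this
      filter_upwards [hmem, hball] with y hy hby
      have := key x (Set.mem_Icc_of_Ioo hx') y hy
      have hby' : M * |y - x| ≤ ε := by
        rw [← le_div_iff₀' hM]; exact hby
      have hb : M * |y - x| ^ 2 ≤ ε * |y - x| := by
        nlinarith [abs_nonneg (y - x)]
      calc ‖f y - f x - (y - x) • g x‖ = |f y - f x - g x * (y - x)| := by
            simp [Real.norm_eq_abs]; ring_nf
        _ ≤ M * |y - x| ^ 2 := this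
        _ ≤ ε * |y - x| := hb
        _ = ε * ‖y - x‖ := by simp [Real.norm_eq_abs]
    obtain ⟨c, hc, hceq⟩ := exists_hasDerivAt_eq_slope f g huv hcont hderiv
    have hcmem : c ∈ Set.Icc u v ∩ Set.Icc a b :=
      ⟨Set.mem_Icc_of_Ioo hc, hsub (Set.mem_Icc_of_Ioo hc)⟩
    have hceq' : g c = (f v - f u) / (v - u) := by rw [hceq]
    exact ⟨c, hcmem, c, hcmem, le_of_eq hceq', le_of_eq hceq'.symm⟩
end

section
/- Newton–Leibniz formula (forward direction): Let Q be an interval of ℝ and suppose f is the derivative of F on Q, i.e., f is a control function of F on Q and every function G having f as a control function on Q satisfies G = F + C on Q for some constant C. Then any integral system R of f on Q satisfies R(u, v) = F(v) − F(u) for all u, v ∈ Q. -/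
/-!
An integral system `R` of `f` on `Q` is additive, so for a base point `a ∈ Q` the function
`R a` has increments `R a v - R a u = R u v`; the mean-value bounds of `R` therefore make `f`
a control function of `R a`. Uniqueness of primitives up to a constant gives
`R a = F + C` on `Q`, whence `R u v = R a v - R a u = F v - F u`.
-/

namespace IsIntegralSystem

variable {f : ℝ → ℝ} {R : ℝ → ℝ → ℝ} {Q : Set ℝ}

theorem sub_apply (hR : IsIntegralSystem f R Q) {a u v : ℝ} (ha : a ∈ Q) (hu : u ∈ Q)
    (hv : v ∈ Q) : R a v - R a u = R u v := by
  have := hR.1 a ha u hu v hv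
  linarith

theorem isControl_apply (hQ : Q.OrdConnected) (hR : IsIntegralSystem f R Q) {a : ℝ}
    (ha : a ∈ Q) : IsControl f (R a) Q := by
  intro u hu v hv huv
  obtain ⟨p, hp, q, hq, hlow, hupp⟩ := hR.2 u hu v hv huv
  have hlen : 0 < v - u := sub_pos.2 huv
  rw [hR.sub_apply ha hu hv]
  exact ⟨p, ⟨hp, hQ.out hu hv hp⟩, q, ⟨hq, hQ.out hu hv hq⟩,
    (le_div_iff₀ hlen).2 hlow, (div_le_iff₀ hlen).2 hupp⟩

end IsIntegralSystem

theorem newton_leibniz_forward_general (Q : Set ℝ) (hQ : Q.OrdConnected)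
    (f F : ℝ → ℝ)
    (hderiv : ∀ G : ℝ → ℝ, IsControl f G Q → ∃ C : ℝ, ∀ x ∈ Q, G x = F x + C) :
    ∀ R : ℝ → ℝ → ℝ, IsIntegralSystem f R Q →
      ∀ u ∈ Q, ∀ v ∈ Q, R u v = F v - F u := by
  intro R hR u hu v hv
  obtain ⟨C, hC⟩ := hderiv (R u) (hR.isControl_apply hQ hu)
  rw [← hR.sub_apply hu hu hv, hC u hu, hC v hv]
  ring

theorem newton_leibniz_forward (Q : Set ℝ) (hQ : Q.OrdConnected)
    (f F : ℝ → ℝ) (hctrl : IsControl f F Q)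
    (hderiv : ∀ G : ℝ → ℝ, IsControl f G Q → ∃ C : ℝ, ∀ x ∈ Q, G x = F x + C) :
    ∀ R : ℝ → ℝ → ℝ, IsIntegralSystem f R Q →
      ∀ u ∈ Q, ∀ v ∈ Q, R u v = F v - F u :=
  newton_leibniz_forward_general Q hQ f F hderiv
end

section
/- Newton–Leibniz formula (converse direction): Let Q be an interval of ℝ and suppose f has a unique integral system S on Q (S is an integral system of f on Q and any integral system of f on Q coincides with S). Fix u ∈ Q and define F(x) = S(u, x) for x ∈ Q. Then f is the derivative of F on Q, i.e., f is a control function of F on Q and every function G having f as a control function on Q satisfies G = F + C on Q for some constant C. -/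
theorem newton_leibniz_converse (Q : Set ℝ) (hQ : Q.OrdConnected)
    (f : ℝ → ℝ) (S : ℝ → ℝ → ℝ) (hS : IsIntegralSystem f S Q)
    (huniq : ∀ R : ℝ → ℝ → ℝ, IsIntegralSystem f R Q →
      ∀ x ∈ Q, ∀ y ∈ Q, R x y = S x y)
    (u : ℝ) (hu : u ∈ Q) :
    IsControl f (fun x => S u x) Q ∧
    ∀ G : ℝ → ℝ, IsControl f G Q → ∃ C : ℝ, ∀ x ∈ Q, G x = S u x + C := by
  constructor
  · intro v hv w hw hvw
    obtain ⟨p, hp, q, hq, h1, h2⟩ := hS.2 v hv w hw hvw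
    have hseg : Set.Icc v w ⊆ Q := hQ.out hv hw
    have hadd : S u v + S v w = S u w := hS.1 u hu v hv w hw
    have hpos : (0:ℝ) < w - v := by linarith
    refine ⟨p, ⟨hp, hseg hp⟩, q, ⟨hq, hseg hq⟩, ?_, ?_⟩
    · rw [show S u w - S u v = S v w by linarith]
      exact (le_div_iff₀ hpos).mpr h1
    · rw [show S u w - S u v = S v w by linarith]
      exact (div_le_iff₀ hpos).mpr h2
  · intro G hG
    have hR : IsIntegralSystem f (fun x y => G y - G x) Q := by
      constructor
      · intro a _ b _ c _; ring
      · intro x hx y hy hxy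
        obtain ⟨p, hp, q, hq, h1, h2⟩ := hG x hx y hy hxy
        have hpos : (0:ℝ) < y - x := by linarith
        exact ⟨p, hp.1, q, hq.1, (le_div_iff₀ hpos).mp h1, (div_le_iff₀ hpos).mp h2⟩
    refine ⟨G u, fun x hx => ?_⟩
    have := huniq _ hR u hu x hx
    linarith
end
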